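/- arXiv:2210.14781 — 7 statements merged into one kernel-verified Lean document; each statement's English description precedes it below -/
import Mathlib

section
/- Let ρ₁=(3,2,4), ρ₂=(1,4,0), ρ₃=(1,0,0), ρ₄=(-5,-6,-4) in ℤ³, and let φ : ℤ³ → ℤ⁴ be the group homomorphism u ↦ (⟨u,ρ₁⟩, ⟨u,ρ₂⟩, ⟨u,ρ₃⟩, ⟨u,ρ₄⟩), where ⟨·,·⟩ is the standard dot product. Then φ is injective and its cokernel ℤ⁴/φ(ℤ³) is isomorphic as an abelian group to ℤ × ℤ/2ℤ × ℤ/8ℤ. (This computes the divisor class group Cl(X) ≅ ℤ ⊕ ℤ/2ℤ ⊕ ℤ/8ℤ of the toric Fano 3-fold X associated to the spanning fan of the tetrahedron with vertices ρ₁,…,ρ₄.) -/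
set_option linter.unusedTactic false

/-- The linear map `ℤ³ → ℤ⁴`, `u ↦ (⟨u,ρ₁⟩, ⟨u,ρ₂⟩, ⟨u,ρ₃⟩, ⟨u,ρ₄⟩)` for
`ρ₁=(3,2,4)`, `ρ₂=(1,4,0)`, `ρ₃=(1,0,0)`, `ρ₄=(-5,-6,-4)`. -/
def phiQuartic : (Fin 3 → ℤ) →+ (Fin 4 → ℤ) :=
  AddMonoidHom.mk'
    (fun u => ![3 * u 0 + 2 * u 1 + 4 * u 2,
                1 * u 0 + 4 * u 1 + 0 * u 2,
                1 * u 0 + 0 * u 1 + 0 * u 2,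
                (-5) * u 0 + (-6) * u 1 + (-4) * u 2])
    (by
      intro a b
      funext i
      fin_cases i <;> simp [Pi.add_apply] <;> ring)

/-- The cokernel projection coming from the Smith normal form computation. -/
def psiQuartic : (Fin 4 → ℤ) →+ ℤ × ZMod 2 × ZMod 8 :=
  AddMonoidHom.mk'
    (fun v => (v 0 + v 1 + v 2 + v 3,
               ((v 0 - 3 * v 1 : ℤ) : ZMod 2),
               ((2 * v 0 - 7 * v 1 + v 2 : ℤ) : ZMod 8)))
    (by
      intro a b
      simp only [Pi.add_apply]
      refine Prod.ext ?_ (Prod.ext ?_ ?_) <;> simp <;> try (push_cast; ring))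

lemma psiQuartic_surj : Function.Surjective psiQuartic := by
  rintro ⟨a, b, c⟩
  refine ⟨a • ![0, 0, 0, 1] + (b.val : ℤ) • ![1, 0, -2, 1] + (c.val : ℤ) • ![0, 0, 1, -1], ?_⟩
  show ((_ : ℤ), ((_ : ℤ) : ZMod 2), ((_ : ℤ) : ZMod 8)) = (a, b, c)
  simp only [Pi.add_apply, Pi.smul_apply, Matrix.cons_val_zero, Matrix.cons_val_one,
    Matrix.head_cons, Matrix.cons_val_fin_one, smul_eq_mul]
  refine Prod.ext ?_ (Prod.ext ?_ ?_)
  · show a * 0 + b.val * 1 + c.val * 0 + (a * 0 + b.val * 0 + c.val * 0) +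
      (a * 0 + b.val * (-2) + c.val * 1) + (a * 1 + b.val * 1 + c.val * (-1)) = a
    ring
  · show (((a * 0 + b.val * 1 + c.val * 0) - 3 * (a * 0 + b.val * 0 + c.val * 0) : ℤ) : ZMod 2) = b
    push_cast
    simp [ZMod.natCast_val, ZMod.cast_id]
  · show ((2 * (a * 0 + b.val * 1 + c.val * 0) - 7 * (a * 0 + b.val * 0 + c.val * 0)
      + (a * 0 + b.val * (-2) + c.val * 1) : ℤ) : ZMod 8) = c
    push_cast
    simp [ZMod.natCast_val, ZMod.cast_id]
    ring

lemma ker_psiQuartic : psiQuartic.ker = phiQuartic.range := by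
  ext v
  constructor
  · intro hv
    rw [AddMonoidHom.mem_ker] at hv
    have h1 : v 0 + v 1 + v 2 + v 3 = 0 := congrArg Prod.fst hv
    have h2' : ((v 0 - 3 * v 1 : ℤ) : ZMod 2) = 0 := congrArg (Prod.fst ∘ Prod.snd) hv
    have h3' : ((2 * v 0 - 7 * v 1 + v 2 : ℤ) : ZMod 8) = 0 := congrArg (Prod.snd ∘ Prod.snd) hv
    rw [ZMod.intCast_zmod_eq_zero_iff_dvd] at h2' h3'
    obtain ⟨k, hk⟩ := h2'
    obtain ⟨l, hl⟩ := h3'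
    refine ⟨![v 1 - 4 * k + 8 * l, k - 2 * l, 3 * k - 5 * l], ?_⟩
    funext i
    fin_cases i
    · show 3 * (v 1 - 4 * k + 8 * l) + 2 * (k - 2 * l) + 4 * (3 * k - 5 * l) = v 0; omega
    · show 1 * (v 1 - 4 * k + 8 * l) + 4 * (k - 2 * l) + 0 * (3 * k - 5 * l) = v 1; omega
    · show 1 * (v 1 - 4 * k + 8 * l) + 0 * (k - 2 * l) + 0 * (3 * k - 5 * l) = v 2; omega
    · show (-5) * (v 1 - 4 * k + 8 * l) + (-6) * (k - 2 * l) + (-4) * (3 * k - 5 * l) = v 3; omega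
  · rintro ⟨u, rfl⟩
    rw [AddMonoidHom.mem_ker]
    show ((_ : ℤ), ((_ : ℤ) : ZMod 2), ((_ : ℤ) : ZMod 8)) = 0
    refine Prod.ext ?_ (Prod.ext ?_ ?_)
    · show (3 * u 0 + 2 * u 1 + 4 * u 2) + (1 * u 0 + 4 * u 1 + 0 * u 2)
        + (1 * u 0 + 0 * u 1 + 0 * u 2) + ((-5) * u 0 + (-6) * u 1 + (-4) * u 2) = 0
      ring
    · show (((3 * u 0 + 2 * u 1 + 4 * u 2) - 3 * (1 * u 0 + 4 * u 1 + 0 * u 2) : ℤ) : ZMod 2) = 0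
      rw [ZMod.intCast_zmod_eq_zero_iff_dvd]
      exact ⟨-5 * u 1 + 2 * u 2, by ring⟩
    · show ((2 * (3 * u 0 + 2 * u 1 + 4 * u 2) - 7 * (1 * u 0 + 4 * u 1 + 0 * u 2)
        + (1 * u 0 + 0 * u 1 + 0 * u 2) : ℤ) : ZMod 8) = 0
      rw [ZMod.intCast_zmod_eq_zero_iff_dvd]
      exact ⟨-3 * u 1 + u 2, by ring⟩

/-- The map `φ` is injective and its cokernel is `ℤ × ℤ/2ℤ × ℤ/8ℤ`; this computes
the divisor class group of the toric Fano 3-fold of Proposition 2.1. -/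
theorem stmt_0 :
    Function.Injective phiQuartic ∧
      Nonempty (((Fin 4 → ℤ) ⧸ phiQuartic.range) ≃+ ℤ × ZMod 2 × ZMod 8) := by
  constructor
  · intro a b hab
    have h0 : 3 * a 0 + 2 * a 1 + 4 * a 2 = 3 * b 0 + 2 * b 1 + 4 * b 2 := congrFun hab 0
    have h1 : 1 * a 0 + 4 * a 1 + 0 * a 2 = 1 * b 0 + 4 * b 1 + 0 * b 2 := congrFun hab 1
    have h2 : 1 * a 0 + 0 * a 1 + 0 * a 2 = 1 * b 0 + 0 * b 1 + 0 * b 2 := congrFun hab 2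
    funext i
    fin_cases i
    · show a 0 = b 0; omega
    · show a 1 = b 1; omega
    · show a 2 = b 2; omega
  · exact ⟨ker_psiQuartic ▸ QuotientAddGroup.quotientKerEquivOfSurjective psiQuartic psiQuartic_surj⟩
end

section
/- Let P ⊂ ℝ³ be the convex hull of the points (3,2,4), (1,4,0), (1,0,0), (-5,-6,-4). Then the polar set P° := {u ∈ ℝ³ : ⟨u,v⟩ ≥ -1 for all v ∈ P} equals the convex hull of the four points (-1,0,3/2), (-1,1,0), (3,-1,-2), (-1,0,1/2), and the average of these four points is the origin (so the barycentre of the tetrahedron P° is the origin). -/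
/-!
The polar of the convex hull of `ρ₁, …, ρ₄` is cut out by the four inequalities
`-1 ≤ ⟨u, ρⱼ⟩`. The vectors `qᵢ` satisfy `⟨qᵢ, ρⱼ⟩ + 1 = 4 δᵢⱼ` and `∑ ρⱼ = 0`, so every `u` is
the affine combination `∑ⱼ (⟨u, ρⱼ⟩ + 1) / 4 • qⱼ`, whose weights are nonnegative exactly when
`u` satisfies the four inequalities. Hence the polar is the simplex spanned by the `qᵢ`.
-/

open Finset

section Polar

variable {ι : Type*} [Fintype ι]

def polarSet (s : Set (ι → ℝ)) : Set (ι → ℝ) :=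
  {u | ∀ v ∈ s, -1 ≤ u ⬝ᵥ v}

theorem convex_setOf_neg_one_le_dotProduct (u : ι → ℝ) : Convex ℝ {v : ι → ℝ | -1 ≤ u ⬝ᵥ v} :=
  convex_halfSpace_ge ⟨dotProduct_add u, fun c v => dotProduct_smul c u v⟩ (-1)

theorem convex_polarSet (s : Set (ι → ℝ)) : Convex ℝ (polarSet s) := by
  simp only [polarSet, Set.ofPred_forall]
  exact convex_iInter₂ fun v _ => by
    simpa only [dotProduct_comm _ v] using convex_setOf_neg_one_le_dotProduct v

theorem polarSet_convexHull (s : Set (ι → ℝ)) : polarSet (convexHull ℝ s) = polarSet s :=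
  Set.Subset.antisymm (fun _ hu v hv => hu v (subset_convexHull ℝ s hv))
    fun u hu _ hv => convexHull_min hu (convex_setOf_neg_one_le_dotProduct u) hv

end Polar

theorem smul_add_smul_add_smul_add_smul_mem_convexHull {E : Type*} [AddCommGroup E] [Module ℝ E]
    {a b c d : ℝ} (ha : 0 ≤ a) (hb : 0 ≤ b) (hc : 0 ≤ c) (hd : 0 ≤ d) (habcd : a + b + c + d = 1)
    (x y z w : E) : a • x + b • y + c • z + d • w ∈ convexHull ℝ ({x, y, z, w} : Set E) := by
  have := (convex_convexHull ℝ ({x, y, z, w} : Set E)).sum_mem (t := univ)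
    (w := ![a, b, c, d]) (z := ![x, y, z, w]) (fun i _ => by fin_cases i <;> assumption)
    (by simpa [Fin.sum_univ_four] using habcd)
    (fun i _ => subset_convexHull ℝ _ (by fin_cases i <;> simp))
  simpa [Fin.sum_univ_four] using this

theorem polarSet_tetrahedron_subset :
    polarSet ({![3, 2, 4], ![1, 4, 0], ![1, 0, 0], ![-5, -6, -4]} : Set (Fin 3 → ℝ)) ⊆
      convexHull ℝ {![-1, 0, 3/2], ![-1, 1, 0], ![3, -1, -2], ![-1, 0, 1/2]} := by
  intro u hu
  simp only [polarSet, Set.mem_insert_iff, Set.mem_singleton_iff, forall_eq_or_imp, forall_eq,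
    Set.mem_ofPred_eq, dotProduct, Fin.sum_univ_three, Matrix.cons_val_zero, Matrix.cons_val_one,
    Matrix.cons_val_two, Matrix.head_cons, Matrix.tail_cons] at hu
  obtain ⟨h₁, h₂, h₃, h₄⟩ := hu
  convert smul_add_smul_add_smul_add_smul_mem_convexHull (a := (3*u 0 + 2*u 1 + 4*u 2 + 1)/4)
    (b := (u 0 + 4*u 1 + 1)/4) (c := (u 0 + 1)/4) (d := (-5*u 0 - 6*u 1 - 4*u 2 + 1)/4)
    (by linarith) (by linarith) (by linarith) (by linarith) (by ring) _ _ _ _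
  ext i
  fin_cases i <;> simp <;> ring

theorem convexHull_subset_polarSet_tetrahedron :
    convexHull ℝ {![-1, 0, 3/2], ![-1, 1, 0], ![3, -1, -2], ![-1, 0, 1/2]} ⊆
      polarSet ({![3, 2, 4], ![1, 4, 0], ![1, 0, 0], ![-5, -6, -4]} : Set (Fin 3 → ℝ)) := by
  refine convexHull_min ?_ (convex_polarSet _)
  rintro q (rfl | rfl | rfl | rfl | rfl) <;>
    rintro v (rfl | rfl | rfl | rfl | rfl) <;> norm_num [dotProduct, Fin.sum_univ_three, Matrix.cons_val_two, Matrix.tail_cons]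

open Finset in
/-- The polar of the tetrahedron `P` with vertices `(3,2,4), (1,4,0), (1,0,0), (-5,-6,-4)`
is the tetrahedron with vertices `(-1,0,3/2), (-1,1,0), (3,-1,-2), (-1,0,1/2)`, and its
barycentre is the origin. -/
theorem stmt_1 :
    let ρ₁ : Fin 3 → ℝ := ![3, 2, 4]
    let ρ₂ : Fin 3 → ℝ := ![1, 4, 0]
    let ρ₃ : Fin 3 → ℝ := ![1, 0, 0]
    let ρ₄ : Fin 3 → ℝ := ![-5, -6, -4]
    let q₁ : Fin 3 → ℝ := ![-1, 0, 3/2]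
    let q₂ : Fin 3 → ℝ := ![-1, 1, 0]
    let q₃ : Fin 3 → ℝ := ![3, -1, -2]
    let q₄ : Fin 3 → ℝ := ![-1, 0, 1/2]
    {u : Fin 3 → ℝ | ∀ v ∈ convexHull ℝ ({ρ₁, ρ₂, ρ₃, ρ₄} : Set (Fin 3 → ℝ)),
        -1 ≤ ∑ i, u i * v i}
      = convexHull ℝ ({q₁, q₂, q₃, q₄} : Set (Fin 3 → ℝ)) ∧
    (1/4 : ℝ) • (q₁ + q₂ + q₃ + q₄) = 0 := by
  intro ρ₁ ρ₂ ρ₃ ρ₄ q₁ q₂ q₃ q₄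
  refine ⟨?_, ?_⟩
  · change polarSet (convexHull ℝ {ρ₁, ρ₂, ρ₃, ρ₄}) = _
    rw [polarSet_convexHull]
    exact polarSet_tetrahedron_subset.antisymm convexHull_subset_polarSet_tetrahedron
  · ext i
    fin_cases i <;> norm_num [q₁, q₂, q₃, q₄]
end

section
/- Let w = (w₁,w₂,w₃,m) ∈ ℤ⁴ satisfy the four inequalities 3w₁+2w₂+4w₃+m ≥ 0, w₁+4w₂+m ≥ 0, w₁+m ≥ 0, and -5w₁-6w₂-4w₃+m ≥ 0. Then w is a non-negative integer linear combination of the seven vectors (-2,0,3,2), (-1,1,0,1), (3,-1,-2,1), (-2,0,1,2), (-1,0,1,1), (0,0,0,1), (1,0,-1,1). (This says that the monoid of lattice points in the cone over the polytope P° placed at height 1 is generated by its Hilbert basis of seven elements, exhibiting the toric 3-fold X of Proposition 2.1 as a (2,2,4)-complete intersection in ℙ(1⁵,2²).) -/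
private lemma stmt_2_key (n : ℕ) : ∀ x y z m : ℤ, m ≤ n →
    0 ≤ 3*x + 2*y + 4*z + m → 0 ≤ x + 4*y + m → 0 ≤ x + m →
    0 ≤ -5*x - 6*y - 4*z + m →
    ∃ a b c d e f g : ℕ,
      x = -2*(a:ℤ) - b + 3*c - 2*d - e + g ∧
      y = (b:ℤ) - c ∧
      z = 3*(a:ℤ) - 2*c + d + e - g ∧
      m = 2*(a:ℤ) + b + c + 2*d + e + f + g := by
  induction n with
  | zero =>
    intro x y z m hm h1 h2 h3 h4
    refine ⟨0, 0, 0, 0, 0, 0, 0, ?_, ?_, ?_, ?_⟩ <;> push_cast <;> omega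
  | succ n ih =>
    intro x y z m hm h1 h2 h3 h4
    by_cases hc : m ≤ n
    · exact ih x y z m hc h1 h2 h3 h4
    · have hm1 : 1 ≤ m := by omega
      have hd :
          (8 ≤ 3*x + 2*y + 4*z + m) ∨
          (4 ≤ x + 4*y + m) ∨
          (4 ≤ x + m) ∨
          (8 ≤ -5*x - 6*y - 4*z + m) ∨
          (2 ≤ 3*x + 2*y + 4*z + m ∧ 2 ≤ -5*x - 6*y - 4*z + m) ∨
          (1 ≤ 3*x + 2*y + 4*z + m ∧ 1 ≤ x + 4*y + m ∧ 1 ≤ x + m ∧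
            1 ≤ -5*x - 6*y - 4*z + m) ∨
          (2 ≤ x + 4*y + m ∧ 2 ≤ x + m) := by omega
      rcases hd with h | h | h | h | h | h | h
      · obtain ⟨a, b, c, d, e, f, g, e1, e2, e3, e4⟩ :=
          ih (x+2) y (z-3) (m-2) (by omega) (by omega) (by omega) (by omega) (by omega)
        exact ⟨a+1, b, c, d, e, f, g, by push_cast; omega, by push_cast; omega,
          by push_cast; omega, by push_cast; omega⟩
      · obtain ⟨a, b, c, d, e, f, g, e1, e2, e3, e4⟩ :=
          ih (x+1) (y-1) z (m-1) (by omega) (by omega) (by omega) (by omega) (by omega)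
        exact ⟨a, b+1, c, d, e, f, g, by push_cast; omega, by push_cast; omega,
          by push_cast; omega, by push_cast; omega⟩
      · obtain ⟨a, b, c, d, e, f, g, e1, e2, e3, e4⟩ :=
          ih (x-3) (y+1) (z+2) (m-1) (by omega) (by omega) (by omega) (by omega) (by omega)
        exact ⟨a, b, c+1, d, e, f, g, by push_cast; omega, by push_cast; omega,
          by push_cast; omega, by push_cast; omega⟩
      · obtain ⟨a, b, c, d, e, f, g, e1, e2, e3, e4⟩ :=
          ih (x+2) y (z-1) (m-2) (by omega) (by omega) (by omega) (by omega) (by omega)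
        exact ⟨a, b, c, d+1, e, f, g, by push_cast; omega, by push_cast; omega,
          by push_cast; omega, by push_cast; omega⟩
      · obtain ⟨a, b, c, d, e, f, g, e1, e2, e3, e4⟩ :=
          ih (x+1) y (z-1) (m-1) (by omega) (by omega) (by omega) (by omega) (by omega)
        exact ⟨a, b, c, d, e+1, f, g, by push_cast; omega, by push_cast; omega,
          by push_cast; omega, by push_cast; omega⟩
      · obtain ⟨a, b, c, d, e, f, g, e1, e2, e3, e4⟩ :=
          ih x y z (m-1) (by omega) (by omega) (by omega) (by omega) (by omega)
        exact ⟨a, b, c, d, e, f+1, g, by push_cast; omega, by push_cast; omega,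
          by push_cast; omega, by push_cast; omega⟩
      · obtain ⟨a, b, c, d, e, f, g, e1, e2, e3, e4⟩ :=
          ih (x-1) y (z+1) (m-1) (by omega) (by omega) (by omega) (by omega) (by omega)
        exact ⟨a, b, c, d, e, f, g+1, by push_cast; omega, by push_cast; omega,
          by push_cast; omega, by push_cast; omega⟩

/-- Every lattice point of the cone `τ` over `P° × {1}` (cut out by the four
inequalities dual to the vertices of `P`) is a non-negative integer combination of
the seven Hilbert-basis vectors. -/
theorem stmt_2 (w : Fin 4 → ℤ)
    (h₁ : 0 ≤ 3 * w 0 + 2 * w 1 + 4 * w 2 + w 3)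
    (h₂ : 0 ≤ w 0 + 4 * w 1 + w 3)
    (h₃ : 0 ≤ w 0 + w 3)
    (h₄ : 0 ≤ -5 * w 0 - 6 * w 1 - 4 * w 2 + w 3) :
    ∃ a b c d e f g : ℕ,
      w = (a : ℤ) • (![-2, 0, 3, 2] : Fin 4 → ℤ)
        + (b : ℤ) • (![-1, 1, 0, 1] : Fin 4 → ℤ)
        + (c : ℤ) • (![3, -1, -2, 1] : Fin 4 → ℤ)
        + (d : ℤ) • (![-2, 0, 1, 2] : Fin 4 → ℤ)
        + (e : ℤ) • (![-1, 0, 1, 1] : Fin 4 → ℤ)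
        + (f : ℤ) • (![0, 0, 0, 1] : Fin 4 → ℤ)
        + (g : ℤ) • (![1, 0, -1, 1] : Fin 4 → ℤ) := by
  obtain ⟨a, b, c, d, e, f, g, e1, e2, e3, e4⟩ :=
    stmt_2_key (w 3).toNat (w 0) (w 1) (w 2) (w 3) (Int.self_le_toNat _)
      (by omega) (by omega) (by omega) (by omega)
  refine ⟨a, b, c, d, e, f, g, ?_⟩
  funext i
  fin_cases i <;>
    simp [Pi.add_apply, Pi.smul_apply, smul_eq_mul] <;>
    omega
end

section
/- Let ρ₁=(3,2,4), ρ₂=(1,4,0), ρ₄=(-5,-6,-4) in ℤ³ and u=(-3,1,2). Then ⟨u,ρ₁⟩ = ⟨u,ρ₂⟩ = ⟨u,ρ₄⟩ = 1, and every nonzero lattice point v ∈ ℤ³ lying in the cone ℝ≥0ρ₁ + ℝ≥0ρ₂ + ℝ≥0ρ₄ satisfies ⟨u,v⟩ ≥ 1. (Hence the torus-fixed point p₁₂₄ of the toric 3-fold X of Proposition 2.1 is a Gorenstein canonical singularity.) -/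
/-- The form `u = (-3,1,2)` takes value `1` on `ρ₁, ρ₂, ρ₄`, and every nonzero lattice
point of the cone `ℝ≥0ρ₁ + ℝ≥0ρ₂ + ℝ≥0ρ₄` has `⟨u,·⟩ ≥ 1`: the point `p₁₂₄` of the
toric 3-fold `X` is a Gorenstein canonical singularity. -/
theorem stmt_7 :
    ((-3 : ℤ) * 3 + 1 * 2 + 2 * 4 = 1 ∧
     (-3 : ℤ) * 1 + 1 * 4 + 2 * 0 = 1 ∧
     (-3 : ℤ) * (-5) + 1 * (-6) + 2 * (-4) = 1) ∧
    ∀ v : Fin 3 → ℤ, v ≠ 0 →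
      (∃ a b c : ℝ, 0 ≤ a ∧ 0 ≤ b ∧ 0 ≤ c ∧
        (fun i => (v i : ℝ))
          = a • (![3, 2, 4] : Fin 3 → ℝ) + b • (![1, 4, 0] : Fin 3 → ℝ)
            + c • (![-5, -6, -4] : Fin 3 → ℝ)) →
      1 ≤ -3 * v 0 + v 1 + 2 * v 2 := by
  refine ⟨⟨by norm_num, by norm_num, by norm_num⟩, ?_⟩
  rintro v hv ⟨a, b, c, ha, hb, hc, heq⟩
  have h0 := congrFun heq 0
  have h1 := congrFun heq 1
  have h2 := congrFun heq 2
  simp [Matrix.cons_val_zero, Matrix.cons_val_one, Pi.add_apply, Pi.smul_apply,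
    smul_eq_mul] at h0 h1 h2
  -- ⟨u,v⟩ = a + b + c over ℝ
  have key : ((-3 * v 0 + v 1 + 2 * v 2 : ℤ) : ℝ) = a + b + c := by
    push_cast
    linarith
  by_contra hlt
  push_neg at hlt
  have hle : (-3 * v 0 + v 1 + 2 * v 2 : ℤ) ≤ 0 := by omega
  have hR : a + b + c ≤ 0 := by
    rw [← key]; exact_mod_cast hle
  have ha0 : a = 0 := by linarith
  have hb0 : b = 0 := by linarith
  have hc0 : c = 0 := by linarith
  apply hv
  funext i
  fin_cases i
  · have : (v 0 : ℝ) = 0 := by rw [h0]; linarith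
    exact_mod_cast this
  · have : (v 1 : ℝ) = 0 := by rw [h1]; linarith
    exact_mod_cast this
  · have : (v 2 : ℝ) = 0 := by rw [h2]; linarith
    exact_mod_cast this
end

section
/- Let v₁=(1,3,2), v₂=(1,3,0), v₃=(1,0,2), v₄=(1,0,0), v₅=(-1,-1,2), v₆=(-1,-1,-4), v₇=(-1,-2,2), v₈=(-1,-2,-4) in ℤ³, and let φ : ℤ³ → ℤ⁸ be the homomorphism u ↦ (⟨u,v₁⟩, …, ⟨u,v₈⟩). Then φ is injective and its cokernel ℤ⁸/φ(ℤ³) is isomorphic as an abelian group to ℤ⁵ × ℤ/2ℤ. (This computes Cl(X) ≅ ℤ⁵ ⊕ ℤ/2ℤ for the first toric Fano 3-fold of Remark 2.2.) -/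
/-!
Write `M` for the matrix with rows `vᵢ`, so that `φ u = M u`, and `w = (1, 0, 1, 0, 1, -2, 1, -2)`
for half its last column. With `r = (1, -1, 0, …, 0)` and explicit integer matrices `K`, `S`, `R`
one has `1 = M K + S R + w rᵀ` together with `R M = 0`, `R S = 1`, `R w = 0`, `rᵀ M = (0, 0, 2)`,
`rᵀ S = 0`, `rᵀ w = 1`. So `x ↦ (R x, rᵀ x mod 2)` maps `ℤ⁸` onto `ℤ⁵ × ℤ/2` with kernel the image
of `M`: if `R x = 0` and `rᵀ x = 2t`, then `x = M (K x) + 2t w = M (K x + t e₃)`.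
Injectivity follows from `(2K + e₃ rᵀ) M = 2`.
-/

/-- The eight vertices of the first polytope of Remark 2.2. -/
def vertsRmk22a : Fin 8 → Fin 3 → ℤ :=
  ![![1, 3, 2], ![1, 3, 0], ![1, 0, 2], ![1, 0, 0],
    ![-1, -1, 2], ![-1, -1, -4], ![-1, -2, 2], ![-1, -2, -4]]

/-- The map `ℤ³ → ℤ⁸`, `u ↦ (⟨u,v₁⟩, …, ⟨u,v₈⟩)`. -/
def phiRmk22a : (Fin 3 → ℤ) →+ (Fin 8 → ℤ) :=
  AddMonoidHom.mk'
    (fun u i => ∑ j, u j * vertsRmk22a i j)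
    (by
      intro a b
      funext i
      simp [Pi.add_apply, add_mul, Finset.sum_add_distrib])

open Matrix

theorem Matrix.mulVec_injective_of_mul_eq_smul_one {m n R : Type*} [Fintype m] [Fintype n]
    [DecidableEq n] [CommRing R] [IsDomain R] {L : Matrix n m R} {M : Matrix m n R} {c : R}
    (hc : c ≠ 0) (h : L * M = c • 1) : Function.Injective M.mulVec := by
  intro u v huv
  apply smul_right_injective (n → R) hc
  simpa only [mulVec_mulVec, h, smul_mulVec, one_mulVec] using congrArg L.mulVec huv

namespace Rmk22a

def vertexMatrix : Matrix (Fin 8) (Fin 3) ℤ := Matrix.of vertsRmk22a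

def freeCoords : Matrix (Fin 5) (Fin 8) ℤ :=
  !![-3, 5, 0, 1, 0, 0, 3, 0;
    1, -2, 0, 0, 1, 0, -2, 0;
    4, -5, 0, 0, 0, 1, -2, 0;
    -4, 6, 1, 0, 0, 0, 3, 0;
    3, -3, 0, 0, 0, 0, -1, 1]

def torsionForm : Fin 8 → ℤ := ![1, -1, 0, 0, 0, 0, 0, 0]

def freeSection : Matrix (Fin 8) (Fin 5) ℤ :=
  !![0, 0, 0, 0, 0;
    0, 0, 0, 0, 0;
    0, 0, 0, 1, 0;
    1, 0, 0, 0, 0;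
    0, 1, 0, 0, 0;
    0, 0, 1, 0, 0;
    0, 0, 0, 0, 0;
    0, 0, 0, 0, 1]

def halfLastColumn : Fin 8 → ℤ := ![1, 0, 1, 0, 1, -2, 1, -2]

def retraction : Matrix (Fin 3) (Fin 8) ℤ :=
  !![3, -5, 0, 0, 0, 0, -3, 0;
    -1, 2, 0, 0, 0, 0, 1, 0;
    0, 0, 0, 0, 0, 0, 0, 0]

lemma freeCoords_mul_vertexMatrix : freeCoords * vertexMatrix = 0 := by decide

lemma torsionForm_vecMul_vertexMatrix : torsionForm ᵥ* vertexMatrix = ![0, 0, 2] := by decide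

lemma freeCoords_mul_freeSection : freeCoords * freeSection = 1 := by decide

lemma torsionForm_vecMul_freeSection : torsionForm ᵥ* freeSection = 0 := by decide

lemma freeCoords_mulVec_halfLastColumn : freeCoords *ᵥ halfLastColumn = 0 := by decide

lemma torsionForm_dotProduct_halfLastColumn : torsionForm ⬝ᵥ halfLastColumn = 1 := by decide

lemma vertexMatrix_col_two : vertexMatrix.col 2 = (2 : ℤ) • halfLastColumn := by decide

lemma vertexMatrix_mul_retraction_add_eq_one :
    vertexMatrix * retraction + freeSection * freeCoords +
      vecMulVec halfLastColumn torsionForm = 1 := by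
  decide

lemma two_smul_retraction_add_mul_vertexMatrix :
    (2 • retraction + vecMulVec (Pi.single 2 1) torsionForm) * vertexMatrix = 2 • 1 := by
  decide

lemma coe_phiRmk22a : ⇑phiRmk22a = vertexMatrix.mulVec := by
  ext u i
  simp only [phiRmk22a, AddMonoidHom.mk'_apply, mulVec, dotProduct, vertexMatrix, of_apply,
    mul_comm]

def cokernelMap : (Fin 8 → ℤ) →+ (Fin 5 → ℤ) × ZMod 2 :=
  AddMonoidHom.mk' (fun x => (freeCoords *ᵥ x, ((torsionForm ⬝ᵥ x : ℤ) : ZMod 2))) fun x y => by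
    simp [mulVec_add, dotProduct_add]

lemma cokernelMap_apply (x : Fin 8 → ℤ) :
    cokernelMap x = (freeCoords *ᵥ x, ((torsionForm ⬝ᵥ x : ℤ) : ZMod 2)) :=
  rfl

lemma cokernelMap_surjective : Function.Surjective cokernelMap := by
  rintro ⟨w, c⟩
  obtain ⟨n, rfl⟩ := ZMod.intCast_surjective c
  refine ⟨freeSection *ᵥ w + n • halfLastColumn, ?_⟩
  simp only [cokernelMap_apply, mulVec_add, mulVec_smul, mulVec_mulVec, dotProduct_add,
    dotProduct_smul, dotProduct_mulVec, freeCoords_mul_freeSection, one_mulVec,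
    freeCoords_mulVec_halfLastColumn, torsionForm_vecMul_freeSection, zero_dotProduct,
    torsionForm_dotProduct_halfLastColumn, smul_zero, add_zero, zero_add, smul_eq_mul, mul_one]

lemma range_phiRmk22a_eq_ker : phiRmk22a.range = cokernelMap.ker := by
  ext x
  simp only [AddMonoidHom.mem_range, AddMonoidHom.mem_ker, coe_phiRmk22a, cokernelMap_apply,
    Prod.mk_eq_zero, ZMod.intCast_zmod_eq_zero_iff_dvd, Nat.cast_ofNat]
  constructor
  · rintro ⟨u, rfl⟩
    refine ⟨by rw [mulVec_mulVec, freeCoords_mul_vertexMatrix, zero_mulVec], ?_⟩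
    rw [dotProduct_mulVec, torsionForm_vecMul_vertexMatrix]
    exact ⟨u 2, by simp [dotProduct, Fin.sum_univ_succ]⟩
  · rintro ⟨hfree, t, ht⟩
    refine ⟨retraction *ᵥ x + Pi.single 2 t, ?_⟩
    have hdecomp := congrArg (· *ᵥ x) vertexMatrix_mul_retraction_add_eq_one
    simp only [add_mulVec, ← mulVec_mulVec, hfree, mulVec_zero, one_mulVec, vecMulVec_mulVec,
      ht, op_smul_eq_smul, add_zero] at hdecomp
    have hsingle : vertexMatrix *ᵥ Pi.single 2 t = (2 * t) • halfLastColumn := by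
      rw [mulVec_single, vertexMatrix_col_two, op_smul_eq_smul, smul_smul, mul_comm]
    rw [mulVec_add, hsingle, hdecomp]

end Rmk22a

/-- `φ` is injective with cokernel `ℤ⁵ × ℤ/2ℤ`: this computes
`Cl(X) ≅ ℤ⁵ ⊕ ℤ/2ℤ` for the first toric Fano 3-fold of Remark 2.2. -/
theorem stmt_8 :
    Function.Injective phiRmk22a ∧
      Nonempty (((Fin 8 → ℤ) ⧸ phiRmk22a.range) ≃+ (Fin 5 → ℤ) × ZMod 2) := by
  refine ⟨?_, ⟨(QuotientAddGroup.quotientAddEquivOfEq Rmk22a.range_phiRmk22a_eq_ker).trans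
    (QuotientAddGroup.quotientKerEquivOfSurjective _ Rmk22a.cokernelMap_surjective)⟩⟩
  rw [Rmk22a.coe_phiRmk22a]
  exact mulVec_injective_of_mul_eq_smul_one two_ne_zero
    Rmk22a.two_smul_retraction_add_mul_vertexMatrix
end

section
/- Let v₁=(3,4,4), v₂=(3,2,4), v₃=(1,2,0), v₄=(1,0,0), v₅=(-1,0,0), v₆=(-1,-2,0), v₇=(-3,-2,-4), v₈=(-3,-4,-4) in ℤ³, and let φ : ℤ³ → ℤ⁸ be the homomorphism u ↦ (⟨u,v₁⟩, …, ⟨u,v₈⟩). Then φ is injective and its cokernel ℤ⁸/φ(ℤ³) is isomorphic as an abelian group to ℤ⁵ × ℤ/2ℤ × ℤ/4ℤ. (This computes Cl(X) ≅ ℤ⁵ ⊕ ℤ/2ℤ ⊕ ℤ/4ℤ for the second toric Fano 3-fold of Remark 2.2.) -/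
/-- The eight vertices of the second polytope of Remark 2.2. -/
def vertsRmk22b : Fin 8 → Fin 3 → ℤ :=
  ![![3, 4, 4], ![3, 2, 4], ![1, 2, 0], ![1, 0, 0],
    ![-1, 0, 0], ![-1, -2, 0], ![-3, -2, -4], ![-3, -4, -4]]

/-- The map `ℤ³ → ℤ⁸`, `u ↦ (⟨u,v₁⟩, …, ⟨u,v₈⟩)`. -/
def phiRmk22b : (Fin 3 → ℤ) →+ (Fin 8 → ℤ) :=
  AddMonoidHom.mk'
    (fun u i => ∑ j, u j * vertsRmk22b i j)
    (by
      intro a b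
      funext i
      simp [Pi.add_apply, add_mul, Finset.sum_add_distrib])

private lemma auxCons75 {α : Type*} (x : α) (u : Fin 7 → α) : Matrix.vecCons x u 5 = u 4 := rfl
private lemma auxCons76 {α : Type*} (x : α) (u : Fin 7 → α) : Matrix.vecCons x u 6 = u 5 := rfl
private lemma auxCons77 {α : Type*} (x : α) (u : Fin 7 → α) : Matrix.vecCons x u 7 = u 6 := rfl
private lemma auxCons64 {α : Type*} (x : α) (u : Fin 6 → α) : Matrix.vecCons x u 4 = u 3 := rfl
private lemma auxCons65 {α : Type*} (x : α) (u : Fin 6 → α) : Matrix.vecCons x u 5 = u 4 := rfl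
private lemma auxCons66 {α : Type*} (x : α) (u : Fin 6 → α) : Matrix.vecCons x u 6 = u 5 := rfl

private lemma auxCons53 {α : Type*} (x : α) (u : Fin 5 → α) : Matrix.vecCons x u 3 = u 2 := rfl
private lemma auxCons54 {α : Type*} (x : α) (u : Fin 5 → α) : Matrix.vecCons x u 4 = u 3 := rfl
private lemma auxCons55 {α : Type*} (x : α) (u : Fin 5 → α) : Matrix.vecCons x u 5 = u 4 := rfl
private lemma auxCons43 {α : Type*} (x : α) (u : Fin 4 → α) : Matrix.vecCons x u 3 = u 2 := rfl
private lemma auxCons44 {α : Type*} (x : α) (u : Fin 4 → α) : Matrix.vecCons x u 4 = u 3 := rfl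
private lemma auxCons33 {α : Type*} (x : α) (u : Fin 3 → α) : Matrix.vecCons x u 3 = u 2 := rfl

/-- The comparison map `ℤ⁸ → ℤ⁵ × ℤ/2 × ℤ/4` coming from the Smith normal form. -/
def psiRmk22b : (Fin 8 → ℤ) →+ (Fin 5 → ℤ) × ZMod 2 × ZMod 4 :=
  AddMonoidHom.mk'
    (fun x =>
      (![x 0 - x 1 - x 2 + x 3, x 3 + x 4, x 2 + x 5, x 1 + x 6, x 1 + x 2 - x 3 + x 7],
        ((x 2 - x 3 : ℤ) : ZMod 2), ((x 1 - x 2 - 2 * x 3 : ℤ) : ZMod 4)))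
    (by
      intro a b
      refine Prod.ext ?_ (Prod.ext ?_ ?_)
      · funext i
        fin_cases i <;> simp [Pi.add_apply] <;> ring
      · show ((_ : ℤ) : ZMod 2) = ((_ : ℤ) : ZMod 2) + ((_ : ℤ) : ZMod 2)
        simp only [Pi.add_apply]
        push_cast
        ring
      · show ((_ : ℤ) : ZMod 4) = ((_ : ℤ) : ZMod 4) + ((_ : ℤ) : ZMod 4)
        simp only [Pi.add_apply]
        push_cast
        ring)

/-- `φ` is injective with cokernel `ℤ⁵ × ℤ/2ℤ × ℤ/4ℤ`: this computes
`Cl(X) ≅ ℤ⁵ ⊕ ℤ/2ℤ ⊕ ℤ/4ℤ` for the second toric Fano 3-fold of Remark 2.2. -/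
theorem stmt_9 :
    Function.Injective phiRmk22b ∧
      Nonempty (((Fin 8 → ℤ) ⧸ phiRmk22b.range) ≃+ (Fin 5 → ℤ) × ZMod 2 × ZMod 4) := by
  constructor
  · rw [injective_iff_map_eq_zero]
    intro u h
    have h2 := congrFun h 2
    have h3 := congrFun h 3
    have h1 := congrFun h 1
    simp [phiRmk22b, vertsRmk22b, Fin.sum_univ_three, auxCons75, auxCons76, auxCons77, auxCons64, auxCons65, auxCons66, auxCons53, auxCons54, auxCons55, auxCons43, auxCons44, auxCons33] at h1 h2 h3
    funext i
    fin_cases i <;> simp <;> omega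
  · have hker : phiRmk22b.range = psiRmk22b.ker := by
      ext x
      constructor
      · rintro ⟨u, rfl⟩
        show psiRmk22b (phiRmk22b u) = 0
        simp only [phiRmk22b, psiRmk22b, AddMonoidHom.mk'_apply]
        refine Prod.ext ?_ (Prod.ext ?_ ?_)
        · funext i
          fin_cases i <;>
            simp [vertsRmk22b, Fin.sum_univ_three, auxCons75, auxCons76, auxCons77, auxCons64, auxCons65, auxCons66, auxCons53, auxCons54, auxCons55, auxCons43, auxCons44, auxCons33] <;> ring
        · show ((_ : ℤ) : ZMod 2) = 0
          rw [ZMod.intCast_zmod_eq_zero_iff_dvd]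
          refine ⟨u 1, ?_⟩
          simp [vertsRmk22b, Fin.sum_univ_three, auxCons75, auxCons76, auxCons77, auxCons64, auxCons65, auxCons66, auxCons53, auxCons54, auxCons55, auxCons43, auxCons44, auxCons33]
          ring
        · show ((_ : ℤ) : ZMod 4) = 0
          rw [ZMod.intCast_zmod_eq_zero_iff_dvd]
          refine ⟨u 2, ?_⟩
          simp [vertsRmk22b, Fin.sum_univ_three, auxCons75, auxCons76, auxCons77, auxCons64, auxCons65, auxCons66, auxCons53, auxCons54, auxCons55, auxCons43, auxCons44, auxCons33]
          ring
      · intro hx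
        have hx' : psiRmk22b x = 0 := hx
        simp only [psiRmk22b, AddMonoidHom.mk'_apply, Prod.mk_eq_zero] at hx'
        obtain ⟨hv, h2, h4⟩ := hx'
        have e0 := congrFun hv 0
        have e1 := congrFun hv 1
        have e2 := congrFun hv 2
        have e3 := congrFun hv 3
        have e4 := congrFun hv 4
        simp [auxCons75, auxCons76, auxCons77, auxCons64, auxCons65, auxCons66, auxCons53, auxCons54, auxCons55, auxCons43, auxCons44, auxCons33] at e0 e1 e2 e3 e4
        rw [ZMod.intCast_zmod_eq_zero_iff_dvd] at h2 h4
        obtain ⟨k, hk⟩ := h2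
        obtain ⟨l, hl⟩ := h4
        refine ⟨![x 3, k, l], ?_⟩
        funext i
        show (∑ j, _ * vertsRmk22b i j) = x i
        fin_cases i <;>
          simp [vertsRmk22b, Fin.sum_univ_three, auxCons75, auxCons76, auxCons77, auxCons64, auxCons65, auxCons66, auxCons53, auxCons54, auxCons55, auxCons43, auxCons44, auxCons33] <;> omega
    have hsurj : Function.Surjective psiRmk22b := by
      rintro ⟨a, b, c⟩
      refine ⟨![2 * (b.val : ℤ) + (c.val : ℤ) + a 0, (b.val : ℤ) + (c.val : ℤ), (b.val : ℤ),
        0, a 1, -(b.val : ℤ) + a 2, -(b.val : ℤ) - (c.val : ℤ) + a 3,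
        -2 * (b.val : ℤ) - (c.val : ℤ) + a 4], ?_⟩
      show (_, _, _) = (a, b, c)
      refine Prod.ext ?_ (Prod.ext ?_ ?_)
      · funext i
        fin_cases i <;> simp [auxCons75, auxCons76, auxCons77, auxCons64, auxCons65, auxCons66, auxCons53, auxCons54, auxCons55, auxCons43, auxCons44, auxCons33] <;> ring
      · show ((_ : ℤ) : ZMod 2) = b
        simp [auxCons75, auxCons76, auxCons77, auxCons64, auxCons65, auxCons66, auxCons53, auxCons54, auxCons55, auxCons43, auxCons44, auxCons33]
      · show ((_ : ℤ) : ZMod 4) = c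
        simp [auxCons75, auxCons76, auxCons77, auxCons64, auxCons65, auxCons66, auxCons53, auxCons54, auxCons55, auxCons43, auxCons44, auxCons33]
    exact ⟨(QuotientAddGroup.quotientAddEquivOfEq hker).trans
      (QuotientAddGroup.quotientKerEquivOfSurjective psiRmk22b hsurj)⟩
end

section
/- Define V : [0,1] × [0,2] → ℝ as follows. For 0 ≤ u ≤ 1/5: V(u,v) = 2 - 2u² + uv - v² - v if 0 ≤ v ≤ 2u; V(u,v) = 2 - v - u² - (3/4)v² if 2u ≤ v ≤ (1-u)/2; V(u,v) = (1/4)(9 - 3u² + 4uv + v² - 2u - 8v) if (1-u)/2 ≤ v ≤ (1+3u)/2; V(u,v) = (7/12)(2-v)² if (1+3u)/2 ≤ v ≤ 2. For 1/5 ≤ u ≤ 1: V(u,v) = 2 - 2u² + uv - v² - v if 0 ≤ v ≤ (1-u)/2; V(u,v) = (1/4)(1-u)(7u - 8v + 9) if (1-u)/2 ≤ v ≤ 2u; V(u,v) = (1/4)(9 - 3u² + 4uv + v² - 2u - 8v) if 2u ≤ v ≤ (1+3u)/2; V(u,v) = (7/12)(2-v)² if (1+3u)/2 ≤ v ≤ 2.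 Then (3/4)·∫₀¹∫₀² V(u,v) dv du = 13/16. (This computes S(W^B_{•,•}; C₀) = 13/16 in the proof of Theorem 3.1, case (♡).) -/
/-!
For fixed `u` the breakpoints `0, 2u, (1-u)/2, (1+3u)/2, 2` of `V(u, ·)` come in one of two
orders, according as `u ≤ 1/5` or `u ≥ 1/5`, so the inner integral splits into four integrals of
quadratics in `v`. In both regimes it comes out as the same cubic `3/2 - u²/2 - u³`, whose
integral over `[0, 1]` is `13/12`; and `(3/4) · 13/12 = 13/16`.
-/

open MeasureTheory intervalIntegral Set

theorem integral_cubic (c₀ c₁ c₂ c₃ a b : ℝ) :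
    ∫ x in a..b, c₀ + c₁ * x + c₂ * x ^ 2 + c₃ * x ^ 3 =
      c₀ * (b - a) + c₁ * (b ^ 2 - a ^ 2) / 2 + c₂ * (b ^ 3 - a ^ 3) / 3 +
        c₃ * (b ^ 4 - a ^ 4) / 4 := by
  have hderiv : ∀ x, HasDerivAt
      (fun x => c₀ * x + c₁ / 2 * x ^ 2 + c₂ / 3 * x ^ 3 + c₃ / 4 * x ^ 4)
      (c₀ + c₁ * x + c₂ * x ^ 2 + c₃ * x ^ 3) x := fun x => by
    refine ((((hasDerivAt_id x).const_mul c₀).add ((hasDerivAt_pow 2 x).const_mul (c₁ / 2))).add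
      ((hasDerivAt_pow 3 x).const_mul (c₂ / 3))).add ((hasDerivAt_pow 4 x).const_mul (c₃ / 4))
      |>.congr_deriv ?_
    push_cast
    ring
  rw [integral_eq_sub_of_hasDerivAt (fun x _ => hderiv x)
    ((by fun_prop : Continuous fun x => c₀ + c₁ * x + c₂ * x ^ 2 + c₃ * x ^ 3).intervalIntegrable
      _ _)]
  ring

theorem integral_eq_of_eqOn_Icc₄ {f g₁ g₂ g₃ g₄ : ℝ → ℝ} {x₀ x₁ x₂ x₃ x₄ : ℝ}
    (h₀₁ : x₀ ≤ x₁) (h₁₂ : x₁ ≤ x₂) (h₂₃ : x₂ ≤ x₃) (h₃₄ : x₃ ≤ x₄)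
    (hg₁ : ContinuousOn g₁ (Icc x₀ x₁)) (hg₂ : ContinuousOn g₂ (Icc x₁ x₂))
    (hg₃ : ContinuousOn g₃ (Icc x₂ x₃)) (hg₄ : ContinuousOn g₄ (Icc x₃ x₄))
    (hf₁ : EqOn f g₁ (Icc x₀ x₁)) (hf₂ : EqOn f g₂ (Icc x₁ x₂)) (hf₃ : EqOn f g₃ (Icc x₂ x₃))
    (hf₄ : EqOn f g₄ (Icc x₃ x₄)) :
    ∫ x in x₀..x₄, f x = (∫ x in x₀..x₁, g₁ x) + (∫ x in x₁..x₂, g₂ x) +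
      (∫ x in x₂..x₃, g₃ x) + ∫ x in x₃..x₄, g₄ x := by
  rw [← uIcc_of_le h₀₁] at hf₁ hg₁
  rw [← uIcc_of_le h₁₂] at hf₂ hg₂
  rw [← uIcc_of_le h₂₃] at hf₃ hg₃
  rw [← uIcc_of_le h₃₄] at hf₄ hg₄
  have i₁ := (hg₁.congr hf₁).intervalIntegrable (μ := volume)
  have i₂ := (hg₂.congr hf₂).intervalIntegrable (μ := volume)
  have i₃ := (hg₃.congr hf₃).intervalIntegrable (μ := volume)
  have i₄ := (hg₄.congr hf₄).intervalIntegrable (μ := volume)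
  rw [← integral_add_adjacent_intervals ((i₁.trans i₂).trans i₃) i₄,
    ← integral_add_adjacent_intervals (i₁.trans i₂) i₃, ← integral_add_adjacent_intervals i₁ i₂,
    integral_congr hf₁, integral_congr hf₂, integral_congr hf₃, integral_congr hf₄]

theorem integral_volume_slice_of_le_one_fifth {u : ℝ} {f : ℝ → ℝ} (hu₀ : 0 ≤ u) (hu : u ≤ 1/5)
    (h₁ : EqOn f (fun v => 2 - 2*u^2 + u*v - v^2 - v) (Icc 0 (2*u)))
    (h₂ : EqOn f (fun v => 2 - v - u^2 - (3/4)*v^2) (Icc (2*u) ((1-u)/2)))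
    (h₃ : EqOn f (fun v => (1/4)*(9 - 3*u^2 + 4*u*v + v^2 - 2*u - 8*v))
      (Icc ((1-u)/2) ((1+3*u)/2)))
    (h₄ : EqOn f (fun v => (7/12)*(2-v)^2) (Icc ((1+3*u)/2) 2)) :
    ∫ v in (0:ℝ)..2, f v = 3/2 - u^2/2 - u^3 := by
  rw [integral_eq_of_eqOn_Icc₄ (by linarith) (by linarith) (by linarith) (by linarith)
    (g₁ := fun v => (2 - 2*u^2) + (u - 1)*v + (-1)*v^2 + 0*v^3)
    (g₂ := fun v => (2 - u^2) + (-1)*v + (-3/4)*v^2 + 0*v^3)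
    (g₃ := fun v => (9 - 3*u^2 - 2*u)/4 + (u - 2)*v + (1/4)*v^2 + 0*v^3)
    (g₄ := fun v => 7/3 + (-7/3)*v + (7/12)*v^2 + 0*v^3)
    (by fun_prop) (by fun_prop) (by fun_prop) (by fun_prop)
    (h₁.trans fun _ _ => by ring) (h₂.trans fun _ _ => by ring)
    (h₃.trans fun _ _ => by ring) (h₄.trans fun _ _ => by ring)]
  simp only [integral_cubic]
  ring

theorem integral_volume_slice_of_one_fifth_le {u : ℝ} {f : ℝ → ℝ} (hu : 1/5 ≤ u) (hu₁ : u ≤ 1)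
    (h₁ : EqOn f (fun v => 2 - 2*u^2 + u*v - v^2 - v) (Icc 0 ((1-u)/2)))
    (h₂ : EqOn f (fun v => (1/4)*(1-u)*(7*u - 8*v + 9)) (Icc ((1-u)/2) (2*u)))
    (h₃ : EqOn f (fun v => (1/4)*(9 - 3*u^2 + 4*u*v + v^2 - 2*u - 8*v))
      (Icc (2*u) ((1+3*u)/2)))
    (h₄ : EqOn f (fun v => (7/12)*(2-v)^2) (Icc ((1+3*u)/2) 2)) :
    ∫ v in (0:ℝ)..2, f v = 3/2 - u^2/2 - u^3 := by
  rw [integral_eq_of_eqOn_Icc₄ (by linarith) (by linarith) (by linarith) (by linarith)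
    (g₁ := fun v => (2 - 2*u^2) + (u - 1)*v + (-1)*v^2 + 0*v^3)
    (g₂ := fun v => (1 - u)*(7*u + 9)/4 + (-2*(1 - u))*v + 0*v^2 + 0*v^3)
    (g₃ := fun v => (9 - 3*u^2 - 2*u)/4 + (u - 2)*v + (1/4)*v^2 + 0*v^3)
    (g₄ := fun v => 7/3 + (-7/3)*v + (7/12)*v^2 + 0*v^3)
    (by fun_prop) (by fun_prop) (by fun_prop) (by fun_prop)
    (h₁.trans fun _ _ => by ring) (h₂.trans fun _ _ => by ring)
    (h₃.trans fun _ _ => by ring) (h₄.trans fun _ _ => by ring)]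
  simp only [integral_cubic]
  ring

/-- The computation `S(W^B_{•,•};C₀) = 13/16` in the proof of Theorem 3.1, case (♡):
for any function `V` agreeing with the piecewise-polynomial volume function
`vol(P(u)|_B - vC₀)` on `[0,1] × [0,2]`, one has `(3/4)·∫₀¹∫₀² V(u,v) dv du = 13/16`. -/
theorem stmt_13 (V : ℝ → ℝ → ℝ)
    (h₁ : ∀ u v, 0 ≤ u → u ≤ 1/5 → 0 ≤ v → v ≤ 2*u →
      V u v = 2 - 2*u^2 + u*v - v^2 - v)
    (h₂ : ∀ u v, 0 ≤ u → u ≤ 1/5 → 2*u ≤ v → v ≤ (1-u)/2 →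
      V u v = 2 - v - u^2 - (3/4)*v^2)
    (h₃ : ∀ u v, 0 ≤ u → u ≤ 1/5 → (1-u)/2 ≤ v → v ≤ (1+3*u)/2 →
      V u v = (1/4)*(9 - 3*u^2 + 4*u*v + v^2 - 2*u - 8*v))
    (h₄ : ∀ u v, 0 ≤ u → u ≤ 1/5 → (1+3*u)/2 ≤ v → v ≤ 2 →
      V u v = (7/12)*(2-v)^2)
    (h₅ : ∀ u v, 1/5 ≤ u → u ≤ 1 → 0 ≤ v → v ≤ (1-u)/2 →
      V u v = 2 - 2*u^2 + u*v - v^2 - v)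
    (h₆ : ∀ u v, 1/5 ≤ u → u ≤ 1 → (1-u)/2 ≤ v → v ≤ 2*u →
      V u v = (1/4)*(1-u)*(7*u - 8*v + 9))
    (h₇ : ∀ u v, 1/5 ≤ u → u ≤ 1 → 2*u ≤ v → v ≤ (1+3*u)/2 →
      V u v = (1/4)*(9 - 3*u^2 + 4*u*v + v^2 - 2*u - 8*v))
    (h₈ : ∀ u v, 1/5 ≤ u → u ≤ 1 → (1+3*u)/2 ≤ v → v ≤ 2 →
      V u v = (7/12)*(2-v)^2) :
    (3/4 : ℝ) * (∫ u in (0:ℝ)..1, ∫ v in (0:ℝ)..2, V u v) = 13/16 := by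
  have inner : EqOn (fun u => ∫ v in (0:ℝ)..2, V u v)
      (fun u => 3/2 + 0*u + (-1/2)*u^2 + (-1)*u^3) (uIcc 0 1) := by
    rw [uIcc_of_le zero_le_one]
    rintro u ⟨hu₀, hu₁⟩
    dsimp only
    rcases le_total u (1/5) with hu | hu
    · rw [integral_volume_slice_of_le_one_fifth hu₀ hu
        (fun v hv => h₁ u v hu₀ hu hv.1 hv.2) (fun v hv => h₂ u v hu₀ hu hv.1 hv.2)
        (fun v hv => h₃ u v hu₀ hu hv.1 hv.2) (fun v hv => h₄ u v hu₀ hu hv.1 hv.2)]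
      ring
    · rw [integral_volume_slice_of_one_fifth_le hu hu₁
        (fun v hv => h₅ u v hu hu₁ hv.1 hv.2) (fun v hv => h₆ u v hu hu₁ hv.1 hv.2)
        (fun v hv => h₇ u v hu hu₁ hv.1 hv.2) (fun v hv => h₈ u v hu hu₁ hv.1 hv.2)]
      ring
  rw [integral_congr inner, integral_cubic]
  norm_num
end
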